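/- Let n ≥ 4 be even and m ≥ 1. Suppose {T_1^m,…,T_n^m} is a strong m-fold embedding set for mK_n^3 and {T_1,…,T_n} is a strong embedding set for K_n^3 (i.e., a strong 1-fold embedding set) such that for every odd i ∈ [n] there exist vertices a_i, b_i for which the transition a_i (i+1) b_i occurs both in T_i^m and in T_i. Then there exists a strong (m+1)-fold embedding set for (m+1)K_n^3. -/

import Mathlib

/-- Cyclic access into a list, used for reading a list of vertices as a closed walk:
the closed walk visits `cyc w 0, cyc w 1, …, cyc w (w.length - 1)` and returns to
`cyc w 0`. -/
def cyc (w : List ℕ) (k : ℕ) : ℕ := w.getD (k % w.length) 0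

/-- The number of positions at which the closed walk `w` traverses the directed
step from `a` to `b`. -/
def dirCount (w : List ℕ) (a b : ℕ) : ℕ :=
  ((List.range w.length).filter fun k => cyc w k = a ∧ cyc w (k + 1) = b).length

/-- The number of occurrences of the transition `a j b` (two consecutive edges
`aj`, `jb`) in the closed walk `w`; the wrap-around positions are included. -/
def transCount (w : List ℕ) (a j b : ℕ) : ℕ :=
  ((List.range w.length).filter fun k =>
      cyc w k = a ∧ cyc w (k + 1) = j ∧ cyc w (k + 2) = b).length

/-- `w` is an `m`-fold Eulerian circuit in `K_n − i`, the complete graph on the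
vertex set `[n] \ {i}`: it is a nonempty closed walk, all its vertices lie in
`[n] \ {i}`, consecutive vertices are distinct, and every edge of `K_n − i` is
traversed exactly `m` times (in either direction). -/
def IsEulerianM (n m i : ℕ) (w : List ℕ) : Prop :=
  w ≠ [] ∧
  (∀ v ∈ w, v ∈ Finset.Icc 1 n ∧ v ≠ i) ∧
  (∀ k < w.length, cyc w k ≠ cyc w (k + 1)) ∧
  (∀ a b : ℕ, a ∈ Finset.Icc 1 n → b ∈ Finset.Icc 1 n → a ≠ i → b ≠ i → a ≠ b →
    dirCount w a b + dirCount w b a = m)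

/-- `w` is an Eulerian circuit in `K_n − i`. -/
def IsEulerian (n i : ℕ) (w : List ℕ) : Prop := IsEulerianM n 1 i w

/-- Eulerian circuits `Ti` (in `K_n − i`) and `Tj` (in `K_n − j`) are strongly
compatible: for every transition `a j b` in `Ti`, `Tj` contains the transition
`b i a`. -/
def StrongCompat (i j : ℕ) (Ti Tj : List ℕ) : Prop :=
  ∀ a b : ℕ, 0 < transCount Ti a j b → 0 < transCount Tj b i a

/-- Eulerian circuits `Ti` (in `K_n − i`) and `Tj` (in `K_n − j`) are compatible:
for every transition `a j b` in `Ti`, `Tj` contains the transition `a i b` or the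
transition `b i a`. -/
def Compat (i j : ℕ) (Ti Tj : List ℕ) : Prop :=
  ∀ a b : ℕ, 0 < transCount Ti a j b →
    0 < transCount Tj a i b ∨ 0 < transCount Tj b i a

/-- `T 1, …, T n` is an embedding set for `K_n^3`. -/
def IsEmbeddingSet (n : ℕ) (T : ℕ → List ℕ) : Prop :=
  (∀ i ∈ Finset.Icc 1 n, IsEulerian n i (T i)) ∧
  (∀ i ∈ Finset.Icc 1 n, ∀ j ∈ Finset.Icc 1 n, i ≠ j → Compat i j (T i) (T j))

/-- `T 1, …, T n` is a strong embedding set for `K_n^3`. -/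
def IsStrongEmbeddingSet (n : ℕ) (T : ℕ → List ℕ) : Prop :=
  (∀ i ∈ Finset.Icc 1 n, IsEulerian n i (T i)) ∧
  (∀ i ∈ Finset.Icc 1 n, ∀ j ∈ Finset.Icc 1 n, i ≠ j → StrongCompat i j (T i) (T j))

/-- `m`-fold Eulerian circuits `Ti` (in `K_n − i`) and `Tj` (in `K_n − j`) are
strongly compatible: for every ordered pair `(a, b)`, the number of occurrences
of the transition `a j b` in `Ti` equals the number of occurrences of the
transition `b i a` in `Tj`. -/
def StrongCompatM (i j : ℕ) (Ti Tj : List ℕ) : Prop :=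
  ∀ a b : ℕ, transCount Ti a j b = transCount Tj b i a

/-- `m`-fold Eulerian circuits `Ti` (in `K_n − i`) and `Tj` (in `K_n − j`) are
compatible: for every unordered pair `{a, b}`, the number of occurrences of the
transitions `a j b` or `b j a` in `Ti` equals the number of occurrences of the
transitions `a i b` or `b i a` in `Tj`. -/
def CompatM (i j : ℕ) (Ti Tj : List ℕ) : Prop :=
  ∀ a b : ℕ, transCount Ti a j b + transCount Ti b j a
    = transCount Tj a i b + transCount Tj b i a

/-- `T 1, …, T n` is an `m`-fold embedding set for `mK_n^3`. -/
def IsEmbeddingSetM (n m : ℕ) (T : ℕ → List ℕ) : Prop :=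
  (∀ i ∈ Finset.Icc 1 n, IsEulerianM n m i (T i)) ∧
  (∀ i ∈ Finset.Icc 1 n, ∀ j ∈ Finset.Icc 1 n, i ≠ j → CompatM i j (T i) (T j))

/-- `T 1, …, T n` is a strong `m`-fold embedding set for `mK_n^3`. -/
def IsStrongEmbeddingSetM (n m : ℕ) (T : ℕ → List ℕ) : Prop :=
  (∀ i ∈ Finset.Icc 1 n, IsEulerianM n m i (T i)) ∧
  (∀ i ∈ Finset.Icc 1 n, ∀ j ∈ Finset.Icc 1 n, i ≠ j → StrongCompatM i j (T i) (T j))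

lemma cyc_mod (w : List ℕ) (k : ℕ) : cyc w (k % w.length) = cyc w k := by
  simp [cyc, Nat.mod_mod_of_dvd]

lemma cyc_add_len (w : List ℕ) (k : ℕ) : cyc w (k + w.length) = cyc w k := by
  unfold cyc
  rcases Nat.eq_zero_or_pos w.length with h | h
  · simp [h]
  · rw [Nat.add_mod_right]

lemma cyc_rotate (w : List ℕ) (r k : ℕ) : cyc (w.rotate r) k = cyc w (k + r) := by
  rcases Nat.eq_zero_or_pos w.length with h | h
  · have : w = [] := List.length_eq_zero_iff.mp h
    simp [this, cyc]
  · unfold cyc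
    rw [List.length_rotate]
    have h1 : k % w.length < w.length := Nat.mod_lt _ h
    have h2 : (k + r) % w.length < w.length := Nat.mod_lt _ h
    rw [List.getD_eq_getElem _ _ (by rwa [List.length_rotate]), List.getD_eq_getElem _ _ h2]
    rw [List.getElem_rotate]
    congr 1
    rw [Nat.mod_add_mod]

lemma cyc_mem (w : List ℕ) (hw : w ≠ []) (k : ℕ) : cyc w k ∈ w := by
  have h : w.length > 0 := List.length_pos_iff.mpr hw
  have h1 : k % w.length < w.length := Nat.mod_lt _ h
  rw [cyc, List.getD_eq_getElem _ _ h1]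
  exact List.getElem_mem _

lemma transCount_eq (w : List ℕ) (a j b : ℕ) :
    transCount w a j b = (List.range w.length).countP
      (fun k => decide (cyc w k = a ∧ cyc w (k + 1) = j ∧ cyc w (k + 2) = b)) :=
  List.countP_eq_length_filter.symm

lemma dirCount_eq (w : List ℕ) (a b : ℕ) :
    dirCount w a b = (List.range w.length).countP
      (fun k => decide (cyc w k = a ∧ cyc w (k + 1) = b)) :=
  List.countP_eq_length_filter.symm

lemma countP_succ_shift (L : ℕ) (p : ℕ → Bool) (hp : p L = p 0) :
    (List.range L).countP (fun k => p (k + 1)) = (List.range L).countP p := by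
  have h1 : (List.range (L+1)).countP p = (List.range L).countP p + (if p 0 then 1 else 0) := by
    rw [List.range_succ, List.countP_append]
    simp [List.countP_cons, hp]
  have h2 : (List.range (L+1)).countP p
      = (List.range L).countP (fun k => p (k + 1)) + (if p 0 then 1 else 0) := by
    rw [List.range_succ_eq_map, List.countP_cons, List.countP_map]
    congr 1
  omega

lemma countP_shift (L : ℕ) (p : ℕ → Bool) (hp : ∀ k, p (k + L) = p k) (r : ℕ) :
    (List.range L).countP (fun k => p (k + r)) = (List.range L).countP p := by
  induction r with
  | zero => rfl
  | succ r ih =>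
      have h : (List.range L).countP (fun k => p (k + (r+1)))
          = (List.range L).countP (fun k => (fun j => p (j + r)) (k + 1)) := by
        apply List.countP_congr
        intro x _
        have hx : x + (r + 1) = x + 1 + r := by omega
        rw [hx]
      rw [h, countP_succ_shift L (fun j => p (j + r))
        (by simpa [Nat.add_comm] using hp r), ih]


lemma transCount_rotate (w : List ℕ) (r a j b : ℕ) :
    transCount (w.rotate r) a j b = transCount w a j b := by
  rw [transCount_eq, transCount_eq, List.length_rotate]
  have h : (List.range w.length).countP
      (fun k => decide (cyc (w.rotate r) k = a ∧ cyc (w.rotate r) (k + 1) = j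
        ∧ cyc (w.rotate r) (k + 2) = b))
      = (List.range w.length).countP (fun k =>
          (fun k' => decide (cyc w k' = a ∧ cyc w (k' + 1) = j ∧ cyc w (k' + 2) = b)) (k + r)) := by
    apply List.countP_congr
    intro x _
    have e1 : x + 1 + r = x + r + 1 := by omega
    have e2 : x + 2 + r = x + r + 2 := by omega
    simp only [cyc_rotate, e1, e2]
  rw [h]
  exact countP_shift w.length
    (fun k' => decide (cyc w k' = a ∧ cyc w (k' + 1) = j ∧ cyc w (k' + 2) = b))
    (fun k => by
      have e1 : k + w.length + 1 = (k+1) + w.length := by omega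
      have e2 : k + w.length + 2 = (k+2) + w.length := by omega
      simp only [e1, e2, cyc_add_len]) r

lemma dirCount_rotate (w : List ℕ) (r a b : ℕ) :
    dirCount (w.rotate r) a b = dirCount w a b := by
  rw [dirCount_eq, dirCount_eq, List.length_rotate]
  have h : (List.range w.length).countP
      (fun k => decide (cyc (w.rotate r) k = a ∧ cyc (w.rotate r) (k + 1) = b))
      = (List.range w.length).countP (fun k =>
          (fun k' => decide (cyc w k' = a ∧ cyc w (k' + 1) = b)) (k + r)) := by
    apply List.countP_congr
    intro x _
    have e1 : x + 1 + r = x + r + 1 := by omega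
    simp only [cyc_rotate, e1]
  rw [h]
  exact countP_shift w.length
    (fun k' => decide (cyc w k' = a ∧ cyc w (k' + 1) = b))
    (fun k => by
      have e1 : k + w.length + 1 = (k+1) + w.length := by omega
      simp only [e1, cyc_add_len]) r

lemma cyc_ne_succ_all (w : List ℕ) (hL : 0 < w.length)
    (hd : ∀ k < w.length, cyc w k ≠ cyc w (k + 1)) (k : ℕ) :
    cyc w k ≠ cyc w (k + 1) := by
  have h1 : cyc w (k % w.length) = cyc w k := cyc_mod w k
  have h2 : cyc w (k % w.length + 1) = cyc w (k + 1) := by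
    rw [← cyc_mod w (k % w.length + 1), Nat.mod_add_mod, cyc_mod]
  rw [← h1, ← h2]
  exact hd _ (Nat.mod_lt _ hL)

lemma two_le_length (w : List ℕ) (hne : w ≠ [])
    (hd : ∀ k < w.length, cyc w k ≠ cyc w (k + 1)) : 2 ≤ w.length := by
  have h1 : 0 < w.length := List.length_pos_iff.mpr hne
  by_contra h
  have hL : w.length = 1 := by omega
  have := hd 0 h1
  apply this
  simp [cyc, hL]


lemma cyc_append_left (w1 w2 : List ℕ) (hL1 : 2 ≤ w1.length) (hL2 : 2 ≤ w2.length)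
    (e0 : cyc w1 0 = cyc w2 0) (e1 : cyc w1 1 = cyc w2 1) :
    ∀ k ≤ w1.length + 1, cyc (w1 ++ w2) k = cyc w1 k := by
  intro k hk
  have hLapp : (w1 ++ w2).length = w1.length + w2.length := List.length_append
  rcases Nat.lt_or_ge k w1.length with h | h
  · unfold cyc
    rw [hLapp, Nat.mod_eq_of_lt (by omega), Nat.mod_eq_of_lt h]
    exact List.getD_append _ _ _ _ h
  · have hcase : k = w1.length ∨ k = w1.length + 1 := by omega
    rcases hcase with rfl | rfl
    · have l1 : cyc (w1 ++ w2) w1.length = cyc w2 0 := by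
        unfold cyc
        rw [hLapp, Nat.mod_eq_of_lt (by omega)]
        rw [List.getD_append_right _ _ _ _ (le_refl _)]
        rw [Nat.sub_self, Nat.zero_mod]
      have r1 : cyc w1 w1.length = cyc w1 0 := by
        unfold cyc; rw [Nat.mod_self, Nat.zero_mod]
      rw [l1, r1, e0]
    · have l1 : cyc (w1 ++ w2) (w1.length + 1) = cyc w2 1 := by
        unfold cyc
        rw [hLapp, Nat.mod_eq_of_lt (by omega)]
        rw [List.getD_append_right _ _ _ _ (by omega)]
        rw [Nat.add_sub_cancel_left, Nat.mod_eq_of_lt (by omega)]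
      have r1 : cyc w1 (w1.length + 1) = cyc w1 1 := by
        rw [← cyc_add_len w1 1]; congr 1; omega
      rw [l1, r1, e1]

lemma cyc_append_right (w1 w2 : List ℕ) (hL1 : 2 ≤ w1.length) (hL2 : 2 ≤ w2.length)
    (e0 : cyc w1 0 = cyc w2 0) (e1 : cyc w1 1 = cyc w2 1) :
    ∀ k ≤ w2.length + 1, cyc (w1 ++ w2) (w1.length + k) = cyc w2 k := by
  intro k hk
  have hLapp : (w1 ++ w2).length = w1.length + w2.length := List.length_append
  rcases Nat.lt_or_ge k w2.length with h | h
  · unfold cyc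
    rw [hLapp, Nat.mod_eq_of_lt (by omega), Nat.mod_eq_of_lt h]
    rw [List.getD_append_right _ _ _ _ (by omega)]
    congr 1
    omega
  · have hcase : k = w2.length ∨ k = w2.length + 1 := by omega
    rcases hcase with rfl | rfl
    · have l1 : cyc (w1 ++ w2) (w1.length + w2.length) = cyc w1 0 := by
        unfold cyc
        rw [hLapp, Nat.mod_self]
        rw [List.getD_append _ _ _ _ (by omega)]
        rw [Nat.zero_mod]
      have r1 : cyc w2 w2.length = cyc w2 0 := by
        unfold cyc; rw [Nat.mod_self, Nat.zero_mod]
      rw [l1, r1, e0]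
    · have l1 : cyc (w1 ++ w2) (w1.length + (w2.length + 1)) = cyc w1 1 := by
        unfold cyc
        have hm : (w1.length + (w2.length + 1)) % (w1 ++ w2).length = 1 := by
          rw [hLapp]
          have he : w1.length + (w2.length + 1) = 1 + (w1.length + w2.length) := by omega
          rw [he, Nat.add_mod_right, Nat.mod_eq_of_lt (by omega)]
        rw [hm, List.getD_append _ _ _ _ (by omega), Nat.mod_eq_of_lt (by omega)]
      have r1 : cyc w2 (w2.length + 1) = cyc w2 1 := by
        rw [← cyc_add_len w2 1]; congr 1; omega
      rw [l1, r1, e1]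

lemma countP_range_add (L1 L2 : ℕ) (p : ℕ → Bool) :
    (List.range (L1 + L2)).countP p
      = (List.range L1).countP p + (List.range L2).countP (fun k => p (L1 + k)) := by
  rw [List.range_add, List.countP_append, List.countP_map]
  rfl

lemma transCount_append (w1 w2 : List ℕ) (hL1 : 2 ≤ w1.length) (hL2 : 2 ≤ w2.length)
    (e0 : cyc w1 0 = cyc w2 0) (e1 : cyc w1 1 = cyc w2 1) (a j b : ℕ) :
    transCount (w1 ++ w2) a j b = transCount w1 a j b + transCount w2 a j b := by
  rw [transCount_eq, transCount_eq, transCount_eq, List.length_append, countP_range_add]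
  congr 1
  · apply List.countP_congr
    intro k hk
    rw [List.mem_range] at hk
    have c0 := cyc_append_left w1 w2 hL1 hL2 e0 e1 k (by omega)
    have c1 := cyc_append_left w1 w2 hL1 hL2 e0 e1 (k+1) (by omega)
    have c2 := cyc_append_left w1 w2 hL1 hL2 e0 e1 (k+2) (by omega)
    simp only [c0, c1, c2]
  · apply List.countP_congr
    intro k hk
    rw [List.mem_range] at hk
    have c0 := cyc_append_right w1 w2 hL1 hL2 e0 e1 k (by omega)
    have c1 := cyc_append_right w1 w2 hL1 hL2 e0 e1 (k+1) (by omega)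
    have c2 := cyc_append_right w1 w2 hL1 hL2 e0 e1 (k+2) (by omega)
    have a1 : w1.length + k + 1 = w1.length + (k + 1) := by omega
    have a2 : w1.length + k + 2 = w1.length + (k + 2) := by omega
    simp only [a1, a2, c0, c1, c2]

lemma dirCount_append (w1 w2 : List ℕ) (hL1 : 2 ≤ w1.length) (hL2 : 2 ≤ w2.length)
    (e0 : cyc w1 0 = cyc w2 0) (e1 : cyc w1 1 = cyc w2 1) (a b : ℕ) :
    dirCount (w1 ++ w2) a b = dirCount w1 a b + dirCount w2 a b := by
  rw [dirCount_eq, dirCount_eq, dirCount_eq, List.length_append, countP_range_add]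
  congr 1
  · apply List.countP_congr
    intro k hk
    rw [List.mem_range] at hk
    have c0 := cyc_append_left w1 w2 hL1 hL2 e0 e1 k (by omega)
    have c1 := cyc_append_left w1 w2 hL1 hL2 e0 e1 (k+1) (by omega)
    simp only [c0, c1]
  · apply List.countP_congr
    intro k hk
    rw [List.mem_range] at hk
    have c0 := cyc_append_right w1 w2 hL1 hL2 e0 e1 k (by omega)
    have c1 := cyc_append_right w1 w2 hL1 hL2 e0 e1 (k+1) (by omega)
    have a1 : w1.length + k + 1 = w1.length + (k + 1) := by omega
    simp only [a1, c0, c1]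

lemma transCount_pos_elim (w : List ℕ) (a j b : ℕ) (h : 0 < transCount w a j b) :
    ∃ k < w.length, cyc w k = a ∧ cyc w (k + 1) = j ∧ cyc w (k + 2) = b := by
  unfold transCount at h
  rw [List.length_pos_iff] at h
  obtain ⟨k, hk⟩ := List.exists_mem_of_ne_nil _ h
  rw [List.mem_filter, List.mem_range] at hk
  exact ⟨k, hk.1, by simpa using hk.2⟩


lemma splice_exists (n m i : ℕ) (w1 w2 : List ℕ)
    (h1 : IsEulerianM n m i w1) (h2 : IsEulerianM n 1 i w2)
    (hsh : ∃ x j y, 0 < transCount w1 x j y ∧ 0 < transCount w2 x j y) :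
    ∃ w, IsEulerianM n (m + 1) i w ∧
      (∀ a j b, transCount w a j b = transCount w1 a j b + transCount w2 a j b) := by
  obtain ⟨x, j, y, hx1, hx2⟩ := hsh
  obtain ⟨hne1, hmem1, hd1, hcnt1⟩ := h1
  obtain ⟨hne2, hmem2, hd2, hcnt2⟩ := h2
  obtain ⟨k1, hk1lt, hk1a, hk1j, hk1b⟩ := transCount_pos_elim _ _ _ _ hx1
  obtain ⟨k2, hk2lt, hk2a, hk2j, hk2b⟩ := transCount_pos_elim _ _ _ _ hx2
  set u1 := w1.rotate (k1 + 1) with hu1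
  set u2 := w2.rotate (k2 + 1) with hu2
  have hLu1 : u1.length = w1.length := List.length_rotate _ _
  have hLu2 : u2.length = w2.length := List.length_rotate _ _
  have hL1 : 2 ≤ u1.length := by rw [hLu1]; exact two_le_length w1 hne1 hd1
  have hL2 : 2 ≤ u2.length := by rw [hLu2]; exact two_le_length w2 hne2 hd2
  have e0 : cyc u1 0 = cyc u2 0 := by
    rw [hu1, hu2, cyc_rotate, cyc_rotate, Nat.zero_add, Nat.zero_add, hk1j, hk2j]
  have e1 : cyc u1 1 = cyc u2 1 := by
    rw [hu1, hu2, cyc_rotate, cyc_rotate,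
      show 1 + (k1 + 1) = k1 + 2 by omega, show 1 + (k2 + 1) = k2 + 2 by omega, hk1b, hk2b]
  have hd1' : ∀ k, cyc u1 k ≠ cyc u1 (k + 1) := by
    intro k
    rw [hu1, cyc_rotate, cyc_rotate, show k + 1 + (k1 + 1) = (k + (k1 + 1)) + 1 by omega]
    exact cyc_ne_succ_all w1 (by omega) hd1 _
  have hd2' : ∀ k, cyc u2 k ≠ cyc u2 (k + 1) := by
    intro k
    rw [hu2, cyc_rotate, cyc_rotate, show k + 1 + (k2 + 1) = (k + (k2 + 1)) + 1 by omega]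
    exact cyc_ne_succ_all w2 (by omega) hd2 _
  refine ⟨u1 ++ u2, ⟨?_, ?_, ?_, ?_⟩, ?_⟩
  · intro h
    rw [List.append_eq_nil_iff] at h
    exact hne1 (by have := h.1; rwa [hu1, List.rotate_eq_nil_iff] at this)
  · intro v hv
    rcases List.mem_append.mp hv with h | h
    · exact hmem1 v (by rwa [hu1, List.mem_rotate] at h)
    · exact hmem2 v (by rwa [hu2, List.mem_rotate] at h)
  · intro k hk
    rw [List.length_append] at hk
    rcases Nat.lt_or_ge k u1.length with h | h
    · rw [cyc_append_left u1 u2 hL1 hL2 e0 e1 k (by omega),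
        cyc_append_left u1 u2 hL1 hL2 e0 e1 (k + 1) (by omega)]
      exact hd1' k
    · obtain ⟨k', rfl⟩ : ∃ k', k = u1.length + k' := ⟨k - u1.length, by omega⟩
      rw [cyc_append_right u1 u2 hL1 hL2 e0 e1 k' (by omega),
        show u1.length + k' + 1 = u1.length + (k' + 1) by omega,
        cyc_append_right u1 u2 hL1 hL2 e0 e1 (k' + 1) (by omega)]
      exact hd2' k'
  · intro a b ha hb hai hbi hab
    rw [dirCount_append u1 u2 hL1 hL2 e0 e1, dirCount_append u1 u2 hL1 hL2 e0 e1,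
      hu1, hu2, dirCount_rotate, dirCount_rotate, dirCount_rotate, dirCount_rotate]
    have := hcnt1 a b ha hb hai hbi hab
    have := hcnt2 a b ha hb hai hbi hab
    omega
  · intro a j' b
    rw [transCount_append u1 u2 hL1 hL2 e0 e1, hu1, hu2, transCount_rotate, transCount_rotate]


/-- Let `n ≥ 4` be even and `m ≥ 1`. If `Tm` is a strong `m`-fold embedding set
for `mK_n^3` and `T1` is a strong embedding set for `K_n^3` (a strong `1`-fold
embedding set) such that for every odd `i ∈ [n]` some transition
`a (i+1) b` occurs both in `Tm i` and in `T1 i`, then there exists a strong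
`(m+1)`-fold embedding set for `(m+1)K_n^3`. -/
theorem mfold_step (n m : ℕ) (hn : 4 ≤ n) (hne : Even n) (hm : 1 ≤ m)
    (Tm T1 : ℕ → List ℕ)
    (hTm : IsStrongEmbeddingSetM n m Tm)
    (hT1 : IsStrongEmbeddingSetM n 1 T1)
    (hshared : ∀ i ∈ Finset.Icc 1 n, Odd i →
      ∃ a b : ℕ,
        0 < transCount (Tm i) a (i + 1) b ∧ 0 < transCount (T1 i) a (i + 1) b) :
    ∃ T : ℕ → List ℕ, IsStrongEmbeddingSetM n (m + 1) T := by
  have key : ∀ i ∈ Finset.Icc 1 n, ∃ w, IsEulerianM n (m + 1) i w ∧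
      ∀ a j b, transCount w a j b = transCount (Tm i) a j b + transCount (T1 i) a j b := by
    intro i hi
    apply splice_exists n m i _ _ (hTm.1 i hi) (hT1.1 i hi)
    rcases Nat.even_or_odd i with he | ho
    · have hi2 : 2 ≤ i := by
        obtain ⟨c, hc⟩ := he
        have : 1 ≤ i := (Finset.mem_Icc.mp hi).1
        omega
      have hi1 : i - 1 ∈ Finset.Icc 1 n := by
        rw [Finset.mem_Icc] at *
        omega
      have hodd : Odd (i - 1) := by
        obtain ⟨c, hc⟩ := he
        exact ⟨c - 1, by omega⟩
      obtain ⟨a, b, ham, ha1⟩ := hshared (i - 1) hi1 hodd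
      have heq : (i - 1) + 1 = i := by omega
      rw [heq] at ham ha1
      have h1 := hTm.2 (i - 1) hi1 i hi (by omega) a b
      have h2 := hT1.2 (i - 1) hi1 i hi (by omega) a b
      exact ⟨b, i - 1, a, by rw [← h1]; exact ham, by rw [← h2]; exact ha1⟩
    · obtain ⟨a, b, ham, ha1⟩ := hshared i hi ho
      exact ⟨a, i + 1, b, ham, ha1⟩
  choose W hW1 hW2 using key
  refine ⟨fun i => if h : i ∈ Finset.Icc 1 n then W i h else [], ?_, ?_⟩
  · intro i hi
    simp only [dif_pos hi]
    exact hW1 i hi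
  · intro i hi j hj hij a b
    simp only [dif_pos hi, dif_pos hj]
    rw [hW2 i hi, hW2 j hj, hTm.2 i hi j hj hij a b, hT1.2 i hi j hj hij a b]
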